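/- Let h₊, h₋ > 0, ρ⁺, ρ⁻ > 0, g ∈ ℝ, σ > 0, k ∈ ℝ, U⁺ ∈ C¹([0, h₊]; ℝ), U⁻ ∈ C¹([−h₋, 0]; ℝ), and c = c_R + i c_I ∈ ℂ with c_I ≠ 0. Suppose ψ⁺ : [0, h₊] → ℂ and ψ⁻ : [−h₋, 0] → ℂ are twice continuously differentiable and satisfy ((U^±(x) − c)² (ψ^±)'(x))' − k² (U^±(x) − c)² ψ^±(x) = 0 on their respective intervals, ψ⁺(h₊) = 0, ψ⁻(−h₋) = 0, ψ^±(0) = −1, and the free boundary condition −g(ρ⁺ − ρ⁻) + σk² = ρ⁺ (U⁺(0) − c)² (ψ⁺)'(0) − ρ⁻ (U⁻(0) − c)² (ψ⁻)'(0). Define Q^± := k² |ψ^±|² + |(ψ^±)'|². Then ∫₀^{h₊} ρ⁺ (U⁺)² Q⁺ dx + ∫_{−h₋}^{0} ρ⁻ (U⁻)² Q⁻ dx = (c_R² + c_I²) ( ∫₀^{h₊} ρ⁺ Q⁺ dx + ∫_{−h₋}^{0} ρ⁻ Q⁻ dx ) − g(ρ⁺ − ρ⁻) + σk². -/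

import Mathlib

/-!
Multiplying the Rayleigh equation `((U - c)² ψ')' = k² (U - c)² ψ` by `conj ψ` shows that
`(U - c)² ψ' conj ψ` is a primitive of `(U - c)² Q`, so `∫ (U - c)² Q` is a boundary term.
Expanding `(U - c)²`, weighting by `ρ^±` and adding the two layers, the boundary values of `ψ^±`
and the free boundary condition give `A - 2 c B + c² C = F` with real moments
`A = ∑ ∫ ρ U² Q`, `B = ∑ ∫ ρ U Q`, `C = ∑ ∫ ρ Q` and `F = -g (ρ⁺ - ρ⁻) + σ k²`.
As `Im c ≠ 0`, the imaginary part gives `B = Re c · C`, and then the real part gives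
`A = |c|² C + F`.
-/

open Set MeasureTheory intervalIntegral ComplexConjugate Interval

section RayleighEnergy

variable {a b k : ℝ} {w ψ ψ' : ℝ → ℂ}

theorem hasDerivAt_mul_deriv_mul_conj {x : ℝ} (hψ : HasDerivAt ψ (ψ' x) x)
    (hode : HasDerivAt (fun t => w t * ψ' t) ((k : ℂ) ^ 2 * w x * ψ x) x) :
    HasDerivAt (fun t => w t * ψ' t * conj (ψ t))
      (w x * ((k ^ 2 * ‖ψ x‖ ^ 2 + ‖ψ' x‖ ^ 2 : ℝ) : ℂ)) x := by
  refine (hode.mul hψ.star).congr_deriv ?_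
  push_cast
  rw [← Complex.mul_conj', ← Complex.mul_conj']
  simp only [Complex.star_def]
  ring

theorem integral_mul_energy_eq_boundary (hw : ContinuousOn w [[a, b]])
    (hψ : ∀ x ∈ [[a, b]], HasDerivAt ψ (ψ' x) x) (hψ' : ContinuousOn ψ' [[a, b]])
    (hode : ∀ x ∈ [[a, b]],
      HasDerivAt (fun t => w t * ψ' t) ((k : ℂ) ^ 2 * w x * ψ x) x) :
    ∫ x in a..b, w x * ((k ^ 2 * ‖ψ x‖ ^ 2 + ‖ψ' x‖ ^ 2 : ℝ) : ℂ)
      = w b * ψ' b * conj (ψ b) - w a * ψ' a * conj (ψ a) := by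
  refine integral_eq_sub_of_hasDerivAt
    (fun x hx => hasDerivAt_mul_deriv_mul_conj (hψ x hx) (hode x hx)) ?_
  have hψc : ContinuousOn ψ [[a, b]] := HasDerivAt.continuousOn hψ
  refine ContinuousOn.intervalIntegrable (hw.mul ?_)
  fun_prop

end RayleighEnergy

theorem integral_ofReal_sub_sq_mul {a b : ℝ} {U Q : ℝ → ℝ} (c : ℂ)
    (hU : ContinuousOn U [[a, b]]) (hQ : ContinuousOn Q [[a, b]]) :
    ∫ x in a..b, ((U x : ℂ) - c) ^ 2 * Q x
      = ((∫ x in a..b, U x ^ 2 * Q x : ℝ) : ℂ) - 2 * c * ((∫ x in a..b, U x * Q x : ℝ) : ℂ)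
        + c ^ 2 * ((∫ x in a..b, Q x : ℝ) : ℂ) := by
  have hofReal : ∀ f : ℝ → ℝ, ContinuousOn f [[a, b]] →
      IntervalIntegrable (fun x => (f x : ℂ)) volume a b := fun f hf =>
    (Complex.continuous_ofReal.comp_continuousOn hf).intervalIntegrable
  have hU2Q := hofReal (fun x => U x ^ 2 * Q x) ((hU.pow 2).mul hQ)
  have hUQ := (hofReal (fun x => U x * Q x) (hU.mul hQ)).const_mul (2 * c)
  have hQ' := (hofReal _ hQ).const_mul (c ^ 2)
  simp only [← intervalIntegral.integral_ofReal, ← intervalIntegral.integral_const_mul]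
  rw [← intervalIntegral.integral_sub hU2Q hUQ,
    ← intervalIntegral.integral_add (hU2Q.sub hUQ) hQ']
  exact integral_congr fun x _ => by push_cast; ring

theorem integral_moments_eq_boundary {a b k : ℝ} {U : ℝ → ℝ} {ψ ψ' : ℝ → ℂ} (c : ℂ)
    (hU : ContinuousOn U [[a, b]]) (hψ : ∀ x ∈ [[a, b]], HasDerivAt ψ (ψ' x) x)
    (hψ' : ContinuousOn ψ' [[a, b]])
    (hode : ∀ x ∈ [[a, b]], HasDerivAt (fun t => ((U t : ℂ) - c) ^ 2 * ψ' t)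
      ((k : ℂ) ^ 2 * ((U x : ℂ) - c) ^ 2 * ψ x) x) :
    ((∫ x in a..b, U x ^ 2 * (k ^ 2 * ‖ψ x‖ ^ 2 + ‖ψ' x‖ ^ 2) : ℝ) : ℂ)
      - 2 * c * ((∫ x in a..b, U x * (k ^ 2 * ‖ψ x‖ ^ 2 + ‖ψ' x‖ ^ 2) : ℝ) : ℂ)
      + c ^ 2 * ((∫ x in a..b, (k ^ 2 * ‖ψ x‖ ^ 2 + ‖ψ' x‖ ^ 2) : ℝ) : ℂ)
    = ((U b : ℂ) - c) ^ 2 * ψ' b * conj (ψ b) - ((U a : ℂ) - c) ^ 2 * ψ' a * conj (ψ a) := by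
  have hψc : ContinuousOn ψ [[a, b]] := HasDerivAt.continuousOn hψ
  rw [← integral_ofReal_sub_sq_mul c hU (by fun_prop)]
  exact integral_mul_energy_eq_boundary (by fun_prop) hψ hψ' hode

section QuadraticMoments

variable {A B C F : ℝ} {c : ℂ}

theorem first_moment_of_quadratic_eq (hc : c.im ≠ 0)
    (h : (A : ℂ) - 2 * c * B + c ^ 2 * C = F) : B = c.re * C := by
  have him := congrArg Complex.im h
  simp only [Complex.add_im, Complex.sub_im, Complex.mul_im, Complex.ofReal_re,
    Complex.ofReal_im, Complex.re_ofNat, Complex.im_ofNat, pow_two] at him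
  refine mul_left_cancel₀ hc ?_
  linear_combination -him / 2

theorem second_moment_of_quadratic_eq (hc : c.im ≠ 0)
    (h : (A : ℂ) - 2 * c * B + c ^ 2 * C = F) : A = (c.re ^ 2 + c.im ^ 2) * C + F := by
  have hre := congrArg Complex.re h
  simp only [Complex.add_re, Complex.sub_re, Complex.mul_re, Complex.ofReal_re,
    Complex.ofReal_im, Complex.re_ofNat, Complex.im_ofNat, pow_two] at hre
  linear_combination hre + 2 * c.re * first_moment_of_quadratic_eq hc h

end QuadraticMoments

theorem second_moment_identity_general
    (hp hm : ℝ) (hhp : 0 < hp) (hhm : 0 < hm)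
    (ρp ρm : ℝ)
    (g σ k : ℝ)
    (Up Up' : ℝ → ℝ)
    (hUp : ∀ x ∈ Icc (0:ℝ) hp, HasDerivAt Up (Up' x) x)
    (Um Um' : ℝ → ℝ)
    (hUm : ∀ x ∈ Icc (-hm) (0:ℝ), HasDerivAt Um (Um' x) x)
    (c : ℂ) (hcI : c.im ≠ 0)
    (ψp ψp' ψp'' ψm ψm' ψm'' : ℝ → ℂ)
    (hψp : ∀ x ∈ Icc (0:ℝ) hp, HasDerivAt ψp (ψp' x) x)
    (hψp' : ∀ x ∈ Icc (0:ℝ) hp, HasDerivAt ψp' (ψp'' x) x)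
    (hψm : ∀ x ∈ Icc (-hm) (0:ℝ), HasDerivAt ψm (ψm' x) x)
    (hψm' : ∀ x ∈ Icc (-hm) (0:ℝ), HasDerivAt ψm' (ψm'' x) x)
    (hodep : ∀ x ∈ Icc (0:ℝ) hp,
      HasDerivAt (fun t => ((Up t : ℂ) - c) ^ 2 * ψp' t)
        ((k : ℂ) ^ 2 * ((Up x : ℂ) - c) ^ 2 * ψp x) x)
    (hodem : ∀ x ∈ Icc (-hm) (0:ℝ),
      HasDerivAt (fun t => ((Um t : ℂ) - c) ^ 2 * ψm' t)
        ((k : ℂ) ^ 2 * ((Um x : ℂ) - c) ^ 2 * ψm x) x)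
    (hbp : ψp hp = 0) (hbm : ψm (-hm) = 0)
    (hnp : ψp 0 = -1) (hnm : ψm 0 = -1)
    (hfb : ((-g * (ρp - ρm) + σ * k ^ 2 : ℝ) : ℂ)
      = (ρp : ℂ) * ((Up 0 : ℂ) - c) ^ 2 * ψp' 0
        - (ρm : ℂ) * ((Um 0 : ℂ) - c) ^ 2 * ψm' 0) :
    (∫ x in (0:ℝ)..hp, ρp * Up x ^ 2 * (k ^ 2 * ‖ψp x‖ ^ 2 + ‖ψp' x‖ ^ 2))
      + ∫ x in (-hm)..0, ρm * Um x ^ 2 * (k ^ 2 * ‖ψm x‖ ^ 2 + ‖ψm' x‖ ^ 2)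
    = (c.re ^ 2 + c.im ^ 2)
        * ((∫ x in (0:ℝ)..hp, ρp * (k ^ 2 * ‖ψp x‖ ^ 2 + ‖ψp' x‖ ^ 2))
          + ∫ x in (-hm)..0, ρm * (k ^ 2 * ‖ψm x‖ ^ 2 + ‖ψm' x‖ ^ 2))
      - g * (ρp - ρm) + σ * k ^ 2 := by
  rw [← uIcc_of_le hhp.le] at hUp hψp hψp' hodep
  rw [← uIcc_of_le (neg_nonpos.mpr hhm.le)] at hUm hψm hψm' hodem
  have eqp := integral_moments_eq_boundary c (HasDerivAt.continuousOn hUp) hψp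
    (HasDerivAt.continuousOn hψp') hodep
  have eqm := integral_moments_eq_boundary c (HasDerivAt.continuousOn hUm) hψm
    (HasDerivAt.continuousOn hψm') hodem
  simp only [hbp, hnp, hbm, hnm, map_zero, map_neg, map_one] at eqp eqm
  simp only [mul_assoc, intervalIntegral.integral_const_mul]
  rw [sub_eq_add_neg _ (g * _), add_assoc, ← neg_mul]
  refine second_moment_of_quadratic_eq hcI
    (B := (ρp * ∫ x in (0:ℝ)..hp, Up x * (k ^ 2 * ‖ψp x‖ ^ 2 + ‖ψp' x‖ ^ 2))
      + ρm * ∫ x in (-hm)..0, Um x * (k ^ 2 * ‖ψm x‖ ^ 2 + ‖ψm' x‖ ^ 2)) ?_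
  push_cast at hfb ⊢
  linear_combination (ρp : ℂ) * eqp + (ρm : ℂ) * eqm - hfb

/-- Second-moment identity from the real parts of the integrated Rayleigh identities,
the free boundary condition, and the first-moment identity. -/
theorem second_moment_identity
    (hp hm : ℝ) (hhp : 0 < hp) (hhm : 0 < hm)
    (ρp ρm : ℝ) (hρp : 0 < ρp) (hρm : 0 < ρm)
    (g σ k : ℝ) (hσ : 0 < σ)
    (Up Up' : ℝ → ℝ)
    (hUp : ∀ x ∈ Icc (0:ℝ) hp, HasDerivAt Up (Up' x) x)
    (hUpc : ContinuousOn Up' (Icc (0:ℝ) hp))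
    (Um Um' : ℝ → ℝ)
    (hUm : ∀ x ∈ Icc (-hm) (0:ℝ), HasDerivAt Um (Um' x) x)
    (hUmc : ContinuousOn Um' (Icc (-hm) (0:ℝ)))
    (c : ℂ) (hcI : c.im ≠ 0)
    (ψp ψp' ψp'' ψm ψm' ψm'' : ℝ → ℂ)
    (hψp : ∀ x ∈ Icc (0:ℝ) hp, HasDerivAt ψp (ψp' x) x)
    (hψp' : ∀ x ∈ Icc (0:ℝ) hp, HasDerivAt ψp' (ψp'' x) x)
    (hψpc : ContinuousOn ψp'' (Icc (0:ℝ) hp))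
    (hψm : ∀ x ∈ Icc (-hm) (0:ℝ), HasDerivAt ψm (ψm' x) x)
    (hψm' : ∀ x ∈ Icc (-hm) (0:ℝ), HasDerivAt ψm' (ψm'' x) x)
    (hψmc : ContinuousOn ψm'' (Icc (-hm) (0:ℝ)))
    (hodep : ∀ x ∈ Icc (0:ℝ) hp,
      HasDerivAt (fun t => ((Up t : ℂ) - c) ^ 2 * ψp' t)
        ((k : ℂ) ^ 2 * ((Up x : ℂ) - c) ^ 2 * ψp x) x)
    (hodem : ∀ x ∈ Icc (-hm) (0:ℝ),
      HasDerivAt (fun t => ((Um t : ℂ) - c) ^ 2 * ψm' t)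
        ((k : ℂ) ^ 2 * ((Um x : ℂ) - c) ^ 2 * ψm x) x)
    (hbp : ψp hp = 0) (hbm : ψm (-hm) = 0)
    (hnp : ψp 0 = -1) (hnm : ψm 0 = -1)
    (hfb : ((-g * (ρp - ρm) + σ * k ^ 2 : ℝ) : ℂ)
      = (ρp : ℂ) * ((Up 0 : ℂ) - c) ^ 2 * ψp' 0
        - (ρm : ℂ) * ((Um 0 : ℂ) - c) ^ 2 * ψm' 0) :
    (∫ x in (0:ℝ)..hp, ρp * Up x ^ 2 * (k ^ 2 * ‖ψp x‖ ^ 2 + ‖ψp' x‖ ^ 2))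
      + ∫ x in (-hm)..0, ρm * Um x ^ 2 * (k ^ 2 * ‖ψm x‖ ^ 2 + ‖ψm' x‖ ^ 2)
    = (c.re ^ 2 + c.im ^ 2)
        * ((∫ x in (0:ℝ)..hp, ρp * (k ^ 2 * ‖ψp x‖ ^ 2 + ‖ψp' x‖ ^ 2))
          + ∫ x in (-hm)..0, ρm * (k ^ 2 * ‖ψm x‖ ^ 2 + ‖ψm' x‖ ^ 2))
      - g * (ρp - ρm) + σ * k ^ 2 :=
  second_moment_identity_general hp hm hhp hhm ρp ρm g σ k Up Up' hUp Um Um' hUm c hcI ψp ψp' ψp''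
    ψm ψm' ψm'' hψp hψp' hψm hψm' hodep hodem hbp hbm hnp hnm hfb
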